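/- Under the hypotheses of the quantitative core of Proposition 1 — g_𝓘(x) = 0, ‖B_𝓘 u‖ ≤ λ‖u‖ for all u ∈ ℂ^U, z = x′ − x, g′ = g_𝓘(x′), τ > 0, and additionally a random-walk step size γ > 0 — the unnormalized Gaussian proposal density ratio satisfies exp(−K‖z‖²/γ²) ≤ exp(−‖τ g′ − z‖²/γ²) / exp(−‖z‖²/γ²) ≤ exp(K‖z‖²/γ²), where K = τ²λ² + 2τλ. -/

import Mathlib

/-!
The gradient `g_𝓘` is affine with linear part `B_𝓘`, so `g_𝓘(x) = 0` gives `g′ = B_𝓘 z` and hence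
`‖τ g′‖ ≤ τλ‖z‖`. For any `v` with `‖v‖ ≤ a‖z‖`, factoring the difference of squares gives
`|‖v − z‖² − ‖z‖²| ≤ ‖v‖ (‖v‖ + 2‖z‖) ≤ (a² + 2a)‖z‖²`; with `a = τλ` this is `K‖z‖²`, and the
ratio of the two Gaussian densities is `exp((‖z‖² − ‖τ g′ − z‖²)/γ²)`.
-/

open Matrix

/-- The mini-batch gradient map `g_𝓘(x) = s ∑_{c∈𝓘} H_cᴴ (H_c x − y_c)`, with scaling
factor `s = C/m`. -/
noncomputable def miniBatchGrad {ι : Type*} [Fintype ι] {U : ℕ} {Bsz : ι → ℕ}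
    (H : (c : ι) → Matrix (Fin (Bsz c)) (Fin U) ℂ) (y : (c : ι) → Fin (Bsz c) → ℂ)
    (s : ℝ) (x : Fin U → ℂ) : Fin U → ℂ :=
  (s : ℂ) • ∑ c, (H c)ᴴ *ᵥ ((H c) *ᵥ x - y c)

/-- The mini-batch Hessian `B_𝓘 = s ∑_{c∈𝓘} H_cᴴ H_c`, with scaling factor `s = C/m`. -/
noncomputable def miniBatchHessian {ι : Type*} [Fintype ι] {U : ℕ} {Bsz : ι → ℕ}
    (H : (c : ι) → Matrix (Fin (Bsz c)) (Fin U) ℂ) (s : ℝ) :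
    Matrix (Fin U) (Fin U) ℂ :=
  (s : ℂ) • ∑ c, (H c)ᴴ * (H c)

theorem miniBatchGrad_sub_miniBatchGrad {ι : Type*} [Fintype ι] {U : ℕ} {Bsz : ι → ℕ}
    (H : (c : ι) → Matrix (Fin (Bsz c)) (Fin U) ℂ) (y : (c : ι) → Fin (Bsz c) → ℂ)
    (s : ℝ) (x x' : Fin U → ℂ) :
    miniBatchGrad H y s x' - miniBatchGrad H y s x = miniBatchHessian H s *ᵥ (x' - x) := by
  simp only [miniBatchGrad, miniBatchHessian, ← smul_sub, ← Finset.sum_sub_distrib,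
    smul_mulVec, sum_mulVec, ← mulVec_mulVec, mulVec_sub, sub_sub_sub_cancel_right]

theorem abs_norm_sub_sq_sub_norm_sq_le {E : Type*} [SeminormedAddCommGroup E] {v z : E} {a : ℝ}
    (hv : ‖v‖ ≤ a * ‖z‖) : |‖v - z‖ ^ 2 - ‖z‖ ^ 2| ≤ (a ^ 2 + 2 * a) * ‖z‖ ^ 2 := by
  have hdiff : |‖v - z‖ - ‖z‖| ≤ ‖v‖ := by
    simpa [norm_sub_rev v z] using abs_norm_sub_norm_le (z - v) z
  have hsum : ‖v - z‖ + ‖z‖ ≤ ‖v‖ + 2 * ‖z‖ := by linarith [norm_sub_le v z]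
  calc |‖v - z‖ ^ 2 - ‖z‖ ^ 2| = |‖v - z‖ - ‖z‖| * (‖v - z‖ + ‖z‖) := by
        rw [sq_sub_sq, abs_mul, abs_of_nonneg (by positivity : 0 ≤ ‖v - z‖ + ‖z‖), mul_comm]
    _ ≤ ‖v‖ * (‖v‖ + 2 * ‖z‖) := by gcongr
    _ ≤ a * ‖z‖ * (a * ‖z‖ + 2 * ‖z‖) := by
        have haz : 0 ≤ a * ‖z‖ := (norm_nonneg v).trans hv
        gcongr
    _ = (a ^ 2 + 2 * a) * ‖z‖ ^ 2 := by ring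

theorem exp_neg_div_div_exp_neg_div_bounds {A N K c : ℝ} (hAN : |A - N| ≤ K * N) (hc : 0 ≤ c) :
    Real.exp (-(K * N) / c) ≤ Real.exp (-A / c) / Real.exp (-N / c) ∧
      Real.exp (-A / c) / Real.exp (-N / c) ≤ Real.exp (K * N / c) := by
  rw [← Real.exp_sub, Real.exp_le_exp, Real.exp_le_exp, ← sub_div, neg_sub_neg]
  obtain ⟨hlo, hhi⟩ := abs_le.mp hAN
  exact ⟨by gcongr; linarith, by gcongr; linarith⟩

theorem minibatch_proposal_ratio_bounds_general {ι : Type*} [Fintype ι] (U : ℕ) (Bsz : ι → ℕ)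
    (H : (c : ι) → Matrix (Fin (Bsz c)) (Fin U) ℂ) (y : (c : ι) → Fin (Bsz c) → ℂ)
    (s : ℝ) (lam : ℝ) (τ : ℝ) (hτ : 0 < τ)
    (γ : ℝ)
    (hB : ∀ u : Fin U → ℂ,
        Real.sqrt (∑ i, ‖((miniBatchHessian H s) *ᵥ u) i‖ ^ 2)
          ≤ lam * Real.sqrt (∑ i, ‖u i‖ ^ 2))
    (x x' : Fin U → ℂ) (hg : miniBatchGrad H y s x = 0)
    (z g' : Fin U → ℂ) (hz : z = x' - x) (hg' : g' = miniBatchGrad H y s x')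
    (K : ℝ) (hK : K = τ ^ 2 * lam ^ 2 + 2 * τ * lam) :
    Real.exp (-(K * ∑ i, ‖z i‖ ^ 2) / γ ^ 2)
        ≤ Real.exp (-(∑ i, ‖(τ : ℂ) * g' i - z i‖ ^ 2) / γ ^ 2) /
            Real.exp (-(∑ i, ‖z i‖ ^ 2) / γ ^ 2) ∧
    Real.exp (-(∑ i, ‖(τ : ℂ) * g' i - z i‖ ^ 2) / γ ^ 2) /
            Real.exp (-(∑ i, ‖z i‖ ^ 2) / γ ^ 2)
        ≤ Real.exp ((K * ∑ i, ‖z i‖ ^ 2) / γ ^ 2) := by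
  have hgz : g' = miniBatchHessian H s *ᵥ z := by
    rw [hg', hz, ← miniBatchGrad_sub_miniBatchGrad, hg, sub_zero]
  set Z : EuclideanSpace ℂ (Fin U) := WithLp.toLp 2 z
  set G : EuclideanSpace ℂ (Fin U) := WithLp.toLp 2 g'
  have hG : ‖G‖ ≤ lam * ‖Z‖ := by
    simpa only [EuclideanSpace.norm_eq, ← hgz] using hB z
  have hτG : ‖(τ : ℂ) • G‖ ≤ τ * lam * ‖Z‖ := by
    rw [norm_smul, Complex.norm_real, Real.norm_of_nonneg hτ.le, mul_assoc]
    exact mul_le_mul_of_nonneg_left hG hτ.le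
  have key := abs_norm_sub_sq_sub_norm_sq_le hτG
  rw [EuclideanSpace.norm_sq_eq, EuclideanSpace.norm_sq_eq] at key
  have hKa : K = (τ * lam) ^ 2 + 2 * (τ * lam) := by rw [hK]; ring
  refine exp_neg_div_div_exp_neg_div_bounds ?_ (sq_nonneg γ)
  simpa [hKa, Z, G] using key

/-- Under the hypotheses of the quantitative core of Proposition 1 and a
random-walk step size `γ > 0`, the unnormalized Gaussian proposal density ratio satisfies
`exp(−K‖z‖²/γ²) ≤ exp(−‖τg′ − z‖²/γ²) / exp(−‖z‖²/γ²) ≤ exp(K‖z‖²/γ²)` with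
`K = τ²λ² + 2τλ`. -/
theorem minibatch_proposal_ratio_bounds {ι : Type*} [Fintype ι] (U : ℕ) (Bsz : ι → ℕ)
    (H : (c : ι) → Matrix (Fin (Bsz c)) (Fin U) ℂ) (y : (c : ι) → Fin (Bsz c) → ℂ)
    (s : ℝ) (hs : 0 < s) (lam : ℝ) (hlam : 0 < lam) (τ : ℝ) (hτ : 0 < τ)
    (γ : ℝ) (hγ : 0 < γ)
    (hB : ∀ u : Fin U → ℂ,
        Real.sqrt (∑ i, ‖((miniBatchHessian H s) *ᵥ u) i‖ ^ 2)
          ≤ lam * Real.sqrt (∑ i, ‖u i‖ ^ 2))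
    (x x' : Fin U → ℂ) (hg : miniBatchGrad H y s x = 0)
    (z g' : Fin U → ℂ) (hz : z = x' - x) (hg' : g' = miniBatchGrad H y s x')
    (K : ℝ) (hK : K = τ ^ 2 * lam ^ 2 + 2 * τ * lam) :
    Real.exp (-(K * ∑ i, ‖z i‖ ^ 2) / γ ^ 2)
        ≤ Real.exp (-(∑ i, ‖(τ : ℂ) * g' i - z i‖ ^ 2) / γ ^ 2) /
            Real.exp (-(∑ i, ‖z i‖ ^ 2) / γ ^ 2) ∧
    Real.exp (-(∑ i, ‖(τ : ℂ) * g' i - z i‖ ^ 2) / γ ^ 2) /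
            Real.exp (-(∑ i, ‖z i‖ ^ 2) / γ ^ 2)
        ≤ Real.exp ((K * ∑ i, ‖z i‖ ^ 2) / γ ^ 2) :=
  minibatch_proposal_ratio_bounds_general U Bsz H y s lam τ hτ γ hB x x' hg z g' hz hg' K hK
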